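/- Let X and Y be finite-dimensional *-vector spaces, Γ : X → Y a Hermiticity preserving linear isomorphism, ⟨·,·⟩_{X,Y} a non-degenerate Hermiticity preserving bilinear pairing on X × Y, and ⟨·,·⟩_Y a non-degenerate Hermiticity preserving bilinear form on Y × Y. The following are equivalent: (i) there exists λ > 0 such that ⟨x,y⟩_{X,Y} = λ⟨Γ(x),y⟩_Y for all x ∈ X, y ∈ Y; (ii) for every closed convex cone C of X_h, the dual cone of C in Y_h with respect to ⟨·,·⟩_{X,Y} equals the dual cone of Γ(C) with respect to ⟨·,·⟩_Y; (iii) for every closed convex cone D of Y_h, Γ maps the dual cone of D in X_h (with respect to ⟨·,·⟩_{X,Y}) onto the dual cone of D in Y_h (with respect to ⟨·,·⟩_Y). -/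

import Mathlib

open scoped ComplexOrder

/-- A closed convex cone consisting of Hermitian elements of a ∗-vector space. -/
def IsClosedConvexConeH {X : Type*} [NormedAddCommGroup X] [Module ℂ X] [Star X]
    (C : Set X) : Prop :=
  (∀ x ∈ C, star x = x) ∧ (0 : X) ∈ C ∧ (∀ x ∈ C, ∀ y ∈ C, x + y ∈ C) ∧
    (∀ r : ℝ, 0 ≤ r → ∀ x ∈ C, (r : ℂ) • x ∈ C) ∧ IsClosed C

/-- The dual cone in `Y_h` of a subset of `X_h` with respect to a bilinear pairing. -/
def dualConeR {X Y : Type*} [AddCommGroup X] [Module ℂ X]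
    [AddCommGroup Y] [Module ℂ Y] [Star Y]
    (B : X →ₗ[ℂ] Y →ₗ[ℂ] ℂ) (C : Set X) : Set Y :=
  {y | star y = y ∧ ∀ x ∈ C, 0 ≤ B x y}

/-- The dual cone in `X_h` of a subset of `Y_h` with respect to a bilinear pairing. -/
def dualConeL {X Y : Type*} [AddCommGroup X] [Module ℂ X] [Star X]
    [AddCommGroup Y] [Module ℂ Y]
    (B : X →ₗ[ℂ] Y →ₗ[ℂ] ℂ) (D : Set Y) : Set X :=
  {x | star x = x ∧ ∀ y ∈ D, 0 ≤ B x y}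


/-!
Both cone conditions are tested on the rays `ℝ≥0 • x` through Hermitian elements: this shows
that (ii) and (iii) each force `B x y` and `BY (Γ x) y` to have the same sign for all Hermitian
`x` and `y`. On Hermitian parts these are real bilinear forms. Two real linear functionals with the
same nonnegativity set have the same kernel, hence are positive multiples of each other; and
since `x ↦ BY (Γ x)` is injective, the ratio does not depend on `x`, because a linear map sending
every vector to a multiple of itself is a homothety. Conversely, scaling a pairing by `λ > 0` does
not change dual cones.
-/

open scoped ComplexStarModule
open Complex

namespace LinearMap

theorem exists_mem_smul_eq_of_injective {K V W : Type*} [Field K] [AddCommGroup V] [Module K V]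
    [AddCommGroup W] [Module K W] {S : Set K} {F G : V →ₗ[K] W} (hF : Function.Injective F)
    (h : ∀ v, ∃ c ∈ S, G v = c • F v) : ∃ c ∈ S, G = c • F := by
  have hG : ∀ v, G v ∈ range F := fun v ↦
    let ⟨c, _, hc⟩ := h v; ⟨c • v, by rw [map_smul, hc]⟩
  -- `T = F⁻¹ ∘ G` has every vector as an eigenvector
  let T : V →ₗ[K] V := (LinearEquiv.ofInjective F hF).symm.toLinearMap ∘ₗ G.codRestrict _ hG
  have hFT : ∀ v, F (T v) = G v := fun v ↦ by
    simp only [T, ← LinearEquiv.ofInjective_apply F (h := hF), coe_comp, LinearEquiv.coe_coe,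
      Function.comp_apply, LinearEquiv.apply_symm_apply, codRestrict_apply]
  obtain ⟨a, ha⟩ := T.exists_eq_smul_id_of_forall_notLinearIndependent fun v ↦ by
    obtain ⟨c, -, hc⟩ := h v
    have hTv : T v = c • v := hF (by rw [hFT, hc, map_smul])
    rw [LinearIndependent.pair_iff]
    push Not
    exact ⟨c, -1, by simp [hTv], by simp⟩
  have hGa : G = a • F := ext fun v ↦ by rw [← hFT, ha]; simp
  rcases subsingleton_or_nontrivial V with hV | hV
  · obtain ⟨c, hc, -⟩ := h 0
    exact ⟨c, hc, ext fun v ↦ by simp [Subsingleton.elim v 0]⟩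
  · obtain ⟨v, hv⟩ := exists_ne (0 : V)
    obtain ⟨c, hc, hcv⟩ := h v
    have : c = a := smul_left_injective K ((map_ne_zero_iff F hF).2 hv) <| by
      simp only [← hcv, hGa, smul_apply]
    exact ⟨a, this ▸ hc, hGa⟩

theorem exists_pos_smul_of_nonneg_iff {V : Type*} [AddCommGroup V] [Module ℝ V]
    {φ ψ : V →ₗ[ℝ] ℝ} (h : ∀ v, 0 ≤ φ v ↔ 0 ≤ ψ v) : ∃ c : ℝ, 0 < c ∧ φ = c • ψ := by
  have hker : ∀ v, φ v = 0 ↔ ψ v = 0 := fun v ↦ by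
    have := h (-v)
    simp only [map_neg, neg_nonneg] at this
    rw [le_antisymm_iff, le_antisymm_iff, this, h v, and_comm]
  by_cases hψ : ∀ v, ψ v = 0
  · exact ⟨1, one_pos, ext fun v ↦ by simp [(hker v).2 (hψ v), hψ v]⟩
  obtain ⟨v₀, hv₀⟩ : ∃ v₀, 0 < ψ v₀ := by
    push Not at hψ
    obtain ⟨v, hv⟩ := hψ
    rcases hv.lt_or_gt with hv | hv
    · exact ⟨-v, by simpa using hv⟩
    · exact ⟨v, hv⟩
  have hφv₀ : 0 < φ v₀ := ((h v₀).2 hv₀.le).lt_of_ne fun e ↦ hv₀.ne' ((hker v₀).1 e.symm)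
  refine ⟨φ v₀ / ψ v₀, div_pos hφv₀ hv₀, ext fun v ↦ ?_⟩
  -- `ψ v₀ • v - ψ v • v₀ ∈ ker ψ = ker φ`
  have := (hker (ψ v₀ • v - ψ v • v₀)).2 (by simp only [map_sub, map_smul, smul_eq_mul]; ring)
  simp only [map_sub, map_smul, smul_eq_mul, smul_apply] at this ⊢
  field_simp
  linarith

theorem exists_pos_smul_of_nonneg_iff₂ {V W : Type*} [AddCommGroup V] [Module ℝ V]
    [AddCommGroup W] [Module ℝ W] {b b' : V →ₗ[ℝ] W →ₗ[ℝ] ℝ} (hb' : Function.Injective b')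
    (h : ∀ v w, 0 ≤ b v w ↔ 0 ≤ b' v w) : ∃ l : ℝ, 0 < l ∧ b = l • b' :=
  exists_mem_smul_eq_of_injective hb' fun v ↦ exists_pos_smul_of_nonneg_iff (h v)

end LinearMap

section Hermitian

variable {X Y : Type*} [AddCommGroup X] [Module ℂ X] [StarAddMonoid X]
  [AddCommGroup Y] [Module ℂ Y] [StarAddMonoid Y]

theorem LinearMap.ofReal_re_apply_apply {B : X →ₗ[ℂ] Y →ₗ[ℂ] ℂ}
    (hB : ∀ x y, B (star x) (star y) = starRingEnd ℂ (B x y)) {x : X} {y : Y}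
    (hx : IsSelfAdjoint x) (hy : IsSelfAdjoint y) : ((B x y).re : ℂ) = B x y := by
  rw [← conj_eq_iff_re, ← hB, hx.star_eq, hy.star_eq]

variable [StarModule ℂ X] [StarModule ℂ Y]

theorem LinearMap.ext_of_isSelfAdjoint {M : Type*} [AddCommGroup M] [Module ℂ M]
    {f g : X →ₗ[ℂ] M} (h : ∀ x, IsSelfAdjoint x → f x = g x) : f = g := by
  ext x
  rw [← realPart_add_I_smul_imaginaryPart x, map_add, map_add, map_smul, map_smul,
    h _ (ℜ x).2, h _ (ℑ x).2]

def LinearMap.reSelfAdjoint (B : X →ₗ[ℂ] Y →ₗ[ℂ] ℂ) :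
    selfAdjoint.submodule ℝ X →ₗ[ℝ] selfAdjoint.submodule ℝ Y →ₗ[ℝ] ℝ :=
  LinearMap.mk₂ ℝ (fun x y ↦ (B x y).re) (by simp) (by simp) (by simp) (by simp)

@[simp]
theorem LinearMap.reSelfAdjoint_apply (B : X →ₗ[ℂ] Y →ₗ[ℂ] ℂ) (x : selfAdjoint.submodule ℝ X)
    (y : selfAdjoint.submodule ℝ Y) : B.reSelfAdjoint x y = (B x y).re :=
  rfl

theorem LinearMap.exists_pos_smul_of_nonneg_iff_of_isSelfAdjoint {B B' : X →ₗ[ℂ] Y →ₗ[ℂ] ℂ}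
    (hB : ∀ x y, B (star x) (star y) = starRingEnd ℂ (B x y))
    (hB' : ∀ x y, B' (star x) (star y) = starRingEnd ℂ (B' x y))
    (hB'nd : ∀ x, (∀ y, B' x y = 0) → x = 0)
    (h : ∀ x, IsSelfAdjoint x → ∀ y, IsSelfAdjoint y → (0 ≤ B x y ↔ 0 ≤ B' x y)) :
    ∃ l : ℝ, 0 < l ∧ B = (l : ℂ) • B' := by
  have hinj : Function.Injective (reSelfAdjoint B') := by
    refine (injective_iff_map_eq_zero _).2 fun x hx ↦ Subtype.ext <| hB'nd x fun y ↦ ?_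
    refine congr($(ext_of_isSelfAdjoint (f := B' x) (g := 0) fun y hy ↦ ?_) y)
    rw [← ofReal_re_apply_apply hB' x.2 hy]
    simpa using congr($hx ⟨y, hy⟩)
  obtain ⟨l, hl, hBl⟩ := exists_pos_smul_of_nonneg_iff₂ (b := B.reSelfAdjoint) hinj fun x y ↦ by
    rw [reSelfAdjoint_apply, reSelfAdjoint_apply, ← zero_le_real, ← zero_le_real,
      ofReal_re_apply_apply hB x.2 y.2, ofReal_re_apply_apply hB' x.2 y.2]
    exact h x x.2 y y.2
  refine ⟨l, hl, ext_of_isSelfAdjoint fun x hx ↦ ext_of_isSelfAdjoint fun y hy ↦ ?_⟩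
  rw [smul_apply, smul_apply, smul_eq_mul, ← ofReal_re_apply_apply hB hx hy,
    ← ofReal_re_apply_apply hB' hx hy, ← ofReal_mul]
  exact congrArg ofReal (by simpa using congr($hBl ⟨x, hx⟩ ⟨y, hy⟩))

end Hermitian

section Cones

variable {X Y Z : Type*} [AddCommGroup X] [Module ℂ X] [AddCommGroup Y] [Module ℂ Y]
  [AddCommGroup Z] [Module ℂ Z]

def ray (x : X) : Set X := (fun r : ℝ ↦ (r : ℂ) • x) '' Set.Ici 0

theorem mem_ray_self (x : X) : x ∈ ray x := ⟨1, Set.mem_Ici.2 zero_le_one, by simp⟩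

theorem forall_mem_ray_nonneg_iff (f : X →ₗ[ℂ] ℂ) (x : X) :
    (∀ z ∈ ray x, 0 ≤ f z) ↔ 0 ≤ f x := by
  refine ⟨fun h ↦ h x (mem_ray_self x), fun h ↦ ?_⟩
  rintro _ ⟨r, hr, rfl⟩
  rw [map_smul, smul_eq_mul]
  exact mul_nonneg (zero_le_real.2 hr) h

theorem zero_le_ofReal_mul_iff {l : ℝ} (hl : 0 < l) (z : ℂ) : 0 ≤ (l : ℂ) * z ↔ 0 ≤ z :=
  ⟨fun h ↦ by simpa [← mul_assoc, hl.ne'] using mul_nonneg (zero_le_real.2 (inv_nonneg.2 hl.le)) h,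
    mul_nonneg (zero_le_real.2 hl.le)⟩

theorem mem_dualConeR_ray [Star Y] (B : X →ₗ[ℂ] Y →ₗ[ℂ] ℂ) (x : X) (y : Y) :
    y ∈ dualConeR B (ray x) ↔ star y = y ∧ 0 ≤ B x y :=
  and_congr_right fun _ ↦ forall_mem_ray_nonneg_iff (B.flip y) x

theorem mem_dualConeL_ray [Star X] (B : X →ₗ[ℂ] Y →ₗ[ℂ] ℂ) (x : X) (y : Y) :
    x ∈ dualConeL B (ray y) ↔ star x = x ∧ 0 ≤ B x y :=
  and_congr_right fun _ ↦ forall_mem_ray_nonneg_iff (B x) y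

theorem dualConeR_ofReal_smul [Star Y] {l : ℝ} (hl : 0 < l) (B : X →ₗ[ℂ] Y →ₗ[ℂ] ℂ) (C : Set X) :
    dualConeR ((l : ℂ) • B) C = dualConeR B C := by
  simp [dualConeR, zero_le_ofReal_mul_iff hl]

theorem dualConeL_ofReal_smul [Star X] {l : ℝ} (hl : 0 < l) (B : X →ₗ[ℂ] Y →ₗ[ℂ] ℂ) (D : Set Y) :
    dualConeL ((l : ℂ) • B) D = dualConeL B D := by
  simp [dualConeL, zero_le_ofReal_mul_iff hl]

theorem dualConeR_comp [Star Z] (B : Y →ₗ[ℂ] Z →ₗ[ℂ] ℂ) (f : X →ₗ[ℂ] Y) (C : Set X) :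
    dualConeR (B ∘ₗ f) C = dualConeR B (f '' C) := by
  simp [dualConeR]

theorem LinearEquiv.image_dualConeL_comp [StarAddMonoid X] [StarAddMonoid Y]
    (B : Y →ₗ[ℂ] Z →ₗ[ℂ] ℂ) (e : X ≃ₗ[ℂ] Y) (he : ∀ x, e (star x) = star (e x)) (D : Set Z) :
    e '' dualConeL (B ∘ₗ e.toLinearMap) D = dualConeL B D := by
  ext y
  obtain ⟨x, rfl⟩ := e.surjective y
  simp [dualConeL, ← he, e.injective.eq_iff]

theorem isClosed_ray {X : Type*} [NormedAddCommGroup X] [NormedSpace ℂ X] (x : X) :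
    IsClosed (ray x) := by
  simp only [ray, coe_smul]
  exact isClosedMap_smul_left x _ isClosed_Ici

theorem isClosedConvexConeH_ray {X : Type*} [NormedAddCommGroup X] [NormedSpace ℂ X]
    [StarAddMonoid X] [StarModule ℂ X] {x : X} (hx : IsSelfAdjoint x) :
    IsClosedConvexConeH (ray x) := by
  refine ⟨?_, ⟨0, Set.mem_Ici.2 le_rfl, by simp⟩, ?_, ?_, isClosed_ray x⟩
  · rintro _ ⟨r, -, rfl⟩
    rw [star_smul, hx.star_eq, Complex.star_def, conj_ofReal]
  · rintro _ ⟨r, hr, rfl⟩ _ ⟨s, hs, rfl⟩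
    exact ⟨r + s, Set.mem_Ici.2 (add_nonneg hr hs), by simp [add_smul]⟩
  · rintro t ht _ ⟨r, hr, rfl⟩
    exact ⟨t * r, Set.mem_Ici.2 (mul_nonneg ht hr), by simp [mul_smul]⟩

end Cones

theorem stmt_2_general {X Y : Type*}
    [NormedAddCommGroup X] [NormedSpace ℂ X] [StarAddMonoid X] [StarModule ℂ X]
    [NormedAddCommGroup Y] [NormedSpace ℂ Y] [StarAddMonoid Y] [StarModule ℂ Y]
    (Γ : X ≃ₗ[ℂ] Y) (hΓ : ∀ x, Γ (star x) = star (Γ x))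
    (B : X →ₗ[ℂ] Y →ₗ[ℂ] ℂ)
    (hBh : ∀ x y, B (star x) (star y) = starRingEnd ℂ (B x y))
    (BY : Y →ₗ[ℂ] Y →ₗ[ℂ] ℂ)
    (hYnd : (∀ y, (∀ y', BY y y' = 0) → y = 0) ∧ (∀ y', (∀ y, BY y y' = 0) → y' = 0))
    (hYh : ∀ y y', BY (star y) (star y') = starRingEnd ℂ (BY y y')) :
    ((∃ l : ℝ, 0 < l ∧ ∀ x y, B x y = (l : ℂ) * BY (Γ x) y) ↔
      ∀ C : Set X, IsClosedConvexConeH C → dualConeR B C = dualConeR BY (⇑Γ '' C)) ∧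
    ((∃ l : ℝ, 0 < l ∧ ∀ x y, B x y = (l : ℂ) * BY (Γ x) y) ↔
      ∀ D : Set Y, IsClosedConvexConeH D → ⇑Γ '' dualConeL B D = dualConeL BY D) := by
  set B' : X →ₗ[ℂ] Y →ₗ[ℂ] ℂ := BY ∘ₗ Γ.toLinearMap
  have hB' : ∀ x y, B' (star x) (star y) = starRingEnd ℂ (B' x y) := fun x y ↦ by
    simp [B', hΓ, hYh]
  have hB'nd : ∀ x, (∀ y, B' x y = 0) → x = 0 := fun x hx ↦
    Γ.map_eq_zero_iff.1 (hYnd.1 _ hx)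
  have of_nonneg_iff := LinearMap.exists_pos_smul_of_nonneg_iff_of_isSelfAdjoint hBh hB' hB'nd
  have hi : (∃ l : ℝ, 0 < l ∧ ∀ x y, B x y = (l : ℂ) * BY (Γ x) y) ↔
      ∃ l : ℝ, 0 < l ∧ B = (l : ℂ) • B' := by
    simp only [LinearMap.ext_iff₂]
    rfl
  rw [hi]
  refine ⟨⟨?_, fun h ↦ of_nonneg_iff fun x hx y hy ↦ ?_⟩,
    ⟨?_, fun h ↦ of_nonneg_iff fun x hx y hy ↦ ?_⟩⟩
  · rintro ⟨l, hl, rfl⟩ C -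
    rw [dualConeR_ofReal_smul hl, dualConeR_comp, Γ.coe_coe]
  · have := Set.ext_iff.1 (h _ (isClosedConvexConeH_ray hx)) y
    rw [← Γ.coe_coe, ← dualConeR_comp, mem_dualConeR_ray, mem_dualConeR_ray] at this
    exact and_congr_right_iff.1 this hy
  · rintro ⟨l, hl, rfl⟩ D -
    rw [dualConeL_ofReal_smul hl, Γ.image_dualConeL_comp BY hΓ]
  · have := h _ (isClosedConvexConeH_ray hy)
    rw [← Γ.image_dualConeL_comp BY hΓ, (Set.image_injective.2 Γ.injective).eq_iff] at this
    have := Set.ext_iff.1 this x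
    rw [mem_dualConeL_ray, mem_dualConeL_ray] at this
    exact and_congr_right_iff.1 this hx

/-- For a Hermiticity preserving linear isomorphism `Γ : X → Y`,
a non-degenerate Hermiticity preserving pairing `B` on `X × Y` and a non-degenerate
Hermiticity preserving bilinear form `BY` on `Y`, the following are equivalent:
(i) `B = λ⟨Γ(·),·⟩_Y` for some `λ > 0`; (ii) for every closed convex cone `C` of `X_h`,
the dual of `C` w.r.t. `B` equals the dual of `Γ(C)` w.r.t. `BY`; (iii) for every
closed convex cone `D` of `Y_h`, `Γ` maps the dual of `D` w.r.t. `B` onto the dual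
of `D` w.r.t. `BY`. -/
theorem stmt_2 {X Y : Type*}
    [NormedAddCommGroup X] [NormedSpace ℂ X] [StarAddMonoid X] [StarModule ℂ X]
    [FiniteDimensional ℂ X]
    [NormedAddCommGroup Y] [NormedSpace ℂ Y] [StarAddMonoid Y] [StarModule ℂ Y]
    [FiniteDimensional ℂ Y]
    (Γ : X ≃ₗ[ℂ] Y) (hΓ : ∀ x, Γ (star x) = star (Γ x))
    (B : X →ₗ[ℂ] Y →ₗ[ℂ] ℂ)
    (hBnd : (∀ x, (∀ y, B x y = 0) → x = 0) ∧ (∀ y, (∀ x, B x y = 0) → y = 0))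
    (hBh : ∀ x y, B (star x) (star y) = starRingEnd ℂ (B x y))
    (BY : Y →ₗ[ℂ] Y →ₗ[ℂ] ℂ)
    (hYnd : (∀ y, (∀ y', BY y y' = 0) → y = 0) ∧ (∀ y', (∀ y, BY y y' = 0) → y' = 0))
    (hYh : ∀ y y', BY (star y) (star y') = starRingEnd ℂ (BY y y')) :
    ((∃ l : ℝ, 0 < l ∧ ∀ x y, B x y = (l : ℂ) * BY (Γ x) y) ↔
      ∀ C : Set X, IsClosedConvexConeH C → dualConeR B C = dualConeR BY (⇑Γ '' C)) ∧
    ((∃ l : ℝ, 0 < l ∧ ∀ x y, B x y = (l : ℂ) * BY (Γ x) y) ↔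
      ∀ D : Set Y, IsClosedConvexConeH D → ⇑Γ '' dualConeL B D = dualConeL BY D) :=
  stmt_2_general Γ hΓ B hBh BY hYnd hYh
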